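/- arXiv:2101.04962 — 2 statements merged into one kernel-verified Lean document; each statement's English description precedes it below -/
import Mathlib

section
/- Let S be a state space symmetry from the density matrices on ℂ^m to the density matrices on ℂ^n. Then for every rank-one orthogonal projection P on ℂ^m (pure state), S(P) is a rank-one orthogonal projection on ℂ^n, and the restriction of S to the set of rank-one projections is a bijection onto the set of rank-one projections on ℂ^n. -/
open scoped ComplexOrder Kronecker
open Matrix

noncomputable section

/-- The space of linear maps from `m × m` complex matrices to `n × n` complex matrices. -/
abbrev MatMap (m n : ℕ) := Matrix (Fin m) (Fin m) ℂ →ₗ[ℂ] Matrix (Fin n) (Fin n) ℂ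

/-- The Choi matrix `Choi(Q) = Σ_{i,j} Q(E_{ij}) ⊗ E_{ij}` of a linear map between
matrix spaces. -/
def choi {m n : ℕ} (Q : MatMap m n) : Matrix (Fin n × Fin m) (Fin n × Fin m) ℂ :=
  Matrix.of fun p q => Q (Matrix.single p.2 q.2 1) p.1 q.1

/-- A linear map is completely positive if its Choi matrix is positive semidefinite. -/
def IsCP {m n : ℕ} (Q : MatMap m n) : Prop := (choi Q).PosSemidef

/-- A quantum operation: a completely positive trace-non-increasing linear map. -/
def IsQOp {m n : ℕ} (Q : MatMap m n) : Prop :=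
  IsCP Q ∧ ∀ ρ : Matrix (Fin m) (Fin m) ℂ, ρ.PosSemidef → (Q ρ).trace ≤ ρ.trace

/-- A quantum channel: a completely positive trace-preserving linear map. -/
def IsChannel {m n : ℕ} (Q : MatMap m n) : Prop :=
  IsCP Q ∧ ∀ ρ : Matrix (Fin m) (Fin m) ℂ, (Q ρ).trace = ρ.trace

/-- A density matrix: positive semidefinite with unit trace. -/
def IsDensity {ι : Type*} [Fintype ι] (ρ : Matrix ι ι ℂ) : Prop :=
  ρ.PosSemidef ∧ ρ.trace = 1

/-- A rank-one orthogonal projection `|ψ⟩⟨ψ|` for a unit vector `ψ`. -/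
def IsRankOneProj {d : ℕ} (P : Matrix (Fin d) (Fin d) ℂ) : Prop :=
  ∃ ψ : Fin d → ℂ, star ψ ⬝ᵥ ψ = 1 ∧ P = Matrix.vecMulVec ψ (star ψ)

/-- A state space symmetry: a bijection between the sets of density matrices that
preserves convex combinations. -/
def IsStateSymmetry {ι κ : Type*} [Fintype ι] [Fintype κ]
    (S : Matrix ι ι ℂ → Matrix κ κ ℂ) : Prop :=
  Set.BijOn S {ρ | IsDensity ρ} {ρ | IsDensity ρ} ∧
  ∀ ρ σ : Matrix ι ι ℂ, IsDensity ρ → IsDensity σ → ∀ p : ℝ, 0 ≤ p → p ≤ 1 →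
    S ((p : ℂ) • ρ + ((1 - p : ℝ) : ℂ) • σ) = (p : ℂ) • S ρ + ((1 - p : ℝ) : ℂ) • S σ

/-- An operation space symmetry: a bijection between the sets of quantum operations that
preserves convex combinations and maps the zero map to the zero map. -/
def IsOpSymmetry {m n m' n' : ℕ} (S : MatMap m n → MatMap m' n') : Prop :=
  Set.BijOn S {Q | IsQOp Q} {Q | IsQOp Q} ∧
  (∀ Q R : MatMap m n, IsQOp Q → IsQOp R → ∀ p : ℝ, 0 ≤ p → p ≤ 1 →
    S ((p : ℂ) • Q + ((1 - p : ℝ) : ℂ) • R) = (p : ℂ) • S Q + ((1 - p : ℝ) : ℂ) • S R) ∧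
  S 0 = 0

/-- Transport of a square matrix along an equality of dimensions. -/
def castMat {m n : ℕ} (h : m = n) (A : Matrix (Fin m) (Fin m) ℂ) :
    Matrix (Fin n) (Fin n) ℂ :=
  Matrix.reindex (finCongr h) (finCongr h) A

/-- The unitary channel `ρ ↦ U ρ U†` as a linear map. -/
def adjAction {d : ℕ} (U : Matrix (Fin d) (Fin d) ℂ) : MatMap d d where
  toFun ρ := U * ρ * Uᴴ
  map_add' x y := by simp [Matrix.mul_add, Matrix.add_mul]
  map_smul' c x := by simp [Matrix.mul_smul, Matrix.smul_mul]

/-- The Hilbert–Schmidt adjoint of a linear map between matrix spaces; it is the unique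
linear map satisfying `Tr[A† Q(B)] = Tr[(Q†(A))† B]` for all `A`, `B`. -/
def hsAdjoint {m n : ℕ} (Q : MatMap m n) : MatMap n m where
  toFun A := Matrix.of fun i j => ((Q (Matrix.single i j 1))ᴴ * A).trace
  map_add' A B := by
    ext i j
    simp [Matrix.mul_add, Matrix.trace_add]
  map_smul' c A := by
    ext i j
    simp [Matrix.mul_smul, Matrix.trace_smul]

open scoped Classical in
/-- The positive semidefinite square root (junk value `0` on non-psd inputs). -/
noncomputable def psqrt {d : ℕ} (M : Matrix (Fin d) (Fin d) ℂ) : Matrix (Fin d) (Fin d) ℂ :=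
  if h : M.PosSemidef then
    h.1.eigenvectorUnitary.1 * diagonal ((↑) ∘ (√·) ∘ h.1.eigenvalues) *
      (star h.1.eigenvectorUnitary : Matrix (Fin d) (Fin d) ℂ)
  else 0

/-- The fidelity `F(ρ,σ) = (Tr[√(√ρ σ √ρ)])²` of two density matrices. -/
noncomputable def fidelity {d : ℕ} (ρ σ : Matrix (Fin d) (Fin d) ℂ) : ℝ :=
  ((psqrt (psqrt ρ * σ * psqrt ρ)).trace.re) ^ 2

/-- The double transpose `ρ ↦ [Φ(ρᵀ)]ᵀ` of a linear map between matrix spaces. -/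
def doubleTransposeMap {m n : ℕ} (Φ : MatMap m n) : MatMap m n where
  toFun ρ := (Φ ρᵀ)ᵀ
  map_add' x y := by simp
  map_smul' c x := by simp

/-- A time symmetric quantum operation: completely positive, with `Q†(I_n) ≤ I_m`
and `Q(I_m/m) ≤ I_n/n` in the Loewner order. -/
def IsTSOp {m n : ℕ} (Q : MatMap m n) : Prop :=
  IsCP Q ∧ ((1 : Matrix (Fin m) (Fin m) ℂ) - hsAdjoint Q 1).PosSemidef ∧
    ((n : ℂ)⁻¹ • (1 : Matrix (Fin n) (Fin n) ℂ)
      - Q ((m : ℂ)⁻¹ • (1 : Matrix (Fin m) (Fin m) ℂ))).PosSemidef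

/-!
Pure states are exactly the extreme points of the convex set of density matrices, and a
bijection between convex sets that preserves convex combinations restricts to a bijection
between their extreme points.

A pure state `|ψ⟩⟨ψ|` is extreme: if `a σ ≤ |ψ⟩⟨ψ|` for a state `σ` and `a > 0`, then `σ`
vanishes on `ψ^⊥`, so being Hermitian of trace one it equals `|ψ⟩⟨ψ|`. Conversely, if `ρ` is
extreme, pick a unit eigenvector `ψ` with eigenvalue `t > 0` and put `P = |ψ⟩⟨ψ|`; then
`ρ - t P = (1 - P) ρ (1 - P)` is positive, which writes `ρ` as a convex combination of `P` and
another state, so `ρ = P`.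
-/

theorem Set.BijOn.extremePoints {𝕜 E F : Type*} [Semiring 𝕜] [PartialOrder 𝕜]
    [AddCommMonoid E] [Module 𝕜 E] [AddCommMonoid F] [Module 𝕜 F]
    {S : E → F} {A : Set E} {B : Set F} (hS : Set.BijOn S A B) (hA : Convex 𝕜 A)
    (hconv : ∀ x ∈ A, ∀ y ∈ A, ∀ a b : 𝕜, 0 < a → 0 < b → a + b = 1 →
      S (a • x + b • y) = a • S x + b • S y) :
    Set.BijOn S (A.extremePoints 𝕜) (B.extremePoints 𝕜) := by
  refine ⟨fun x hx => ⟨hS.mapsTo hx.1, fun y₁ hy₁ y₂ hy₂ hSx => ?_⟩,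
    hS.injOn.mono extremePoints_subset, fun y hy => ?_⟩
  · obtain ⟨x₁, hx₁, rfl⟩ := hS.surjOn hy₁
    obtain ⟨x₂, hx₂, rfl⟩ := hS.surjOn hy₂
    obtain ⟨a, b, ha, hb, hab, hcomb⟩ := hSx
    have hcomb' : a • x₁ + b • x₂ = x :=
      hS.injOn (hA hx₁ hx₂ ha.le hb.le hab) hx.1
        (by rw [hconv x₁ hx₁ x₂ hx₂ a b ha hb hab, hcomb])
    rw [hx.2 hx₁ hx₂ ⟨a, b, ha, hb, hab, hcomb'⟩]
  · obtain ⟨x, hx, rfl⟩ := hS.surjOn hy.1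
    refine ⟨x, ⟨hx, fun x₁ hx₁ x₂ hx₂ hseg => ?_⟩, rfl⟩
    obtain ⟨a, b, ha, hb, hab, rfl⟩ := hseg
    refine hS.injOn hx₁ hx ?_
    refine hy.2 (hS.mapsTo hx₁) (hS.mapsTo hx₂) ⟨a, b, ha, hb, hab, ?_⟩
    rw [hconv x₁ hx₁ x₂ hx₂ a b ha hb hab]

section Density

variable {ι : Type*} [Fintype ι]

theorem convex_setOf_isDensity : Convex ℝ {ρ : Matrix ι ι ℂ | IsDensity ρ} := by
  intro ρ hρ σ hσ a b ha hb hab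
  refine ⟨(hρ.1.smul ha).add (hσ.1.smul hb), ?_⟩
  rw [trace_add, trace_smul, trace_smul, hρ.2, hσ.2, ← add_smul, hab, one_smul]

theorem isDensity_vecMulVec_star {ψ : ι → ℂ} (hψ : star ψ ⬝ᵥ ψ = 1) :
    IsDensity (vecMulVec ψ (star ψ)) :=
  ⟨posSemidef_vecMulVec_self_star ψ, by rw [trace_vecMulVec, dotProduct_comm, hψ]⟩

theorem Matrix.PosSemidef.sub_smul_vecMulVec_star [DecidableEq ι] {ρ : Matrix ι ι ℂ}
    (hρ : ρ.PosSemidef) {ψ : ι → ℂ} (hψ : star ψ ⬝ᵥ ψ = 1) {t : ℝ} (hev : ρ *ᵥ ψ = t • ψ) :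
    (ρ - t • vecMulVec ψ (star ψ)).PosSemidef := by
  set P := vecMulVec ψ (star ψ)
  have hPh : Pᴴ = P := by simp [P]
  have hρP : ρ * P = t • P := by rw [mul_vecMulVec, hev, smul_vecMulVec]
  have hPρ : P * ρ = t • P := by
    rw [← hPh, ← hρ.1.eq, ← conjTranspose_mul, hρP, conjTranspose_smul, hPh, star_trivial]
  have hPP : P * P = P := by
    rw [vecMulVec_mul_vecMulVec, hψ, one_smul]
  have hcompress : ρ - t • P = (1 - P) * ρ * (1 - P)ᴴ := by
    rw [conjTranspose_sub, conjTranspose_one, hPh]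
    simp only [sub_mul, mul_sub, Matrix.one_mul, Matrix.mul_one, hρP, hPρ, Matrix.smul_mul, hPP]
    abel
  exact hcompress ▸ hρ.mul_mul_conjTranspose_same (1 - P)

theorem eq_vecMulVec_star_of_posSemidef_sub {σ : Matrix ι ι ℂ} (hσ : IsDensity σ)
    {ψ : ι → ℂ} (hψ : star ψ ⬝ᵥ ψ = 1) {a : ℝ} (ha : 0 < a)
    (hdom : (vecMulVec ψ (star ψ) - a • σ).PosSemidef) : σ = vecMulVec ψ (star ψ) := by
  have hker : ∀ y, star ψ ⬝ᵥ y = 0 → σ *ᵥ y = 0 := by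
    intro y hy
    refine (hσ.1.dotProduct_mulVec_zero_iff y).1
      (le_antisymm ?_ (hσ.1.dotProduct_mulVec_nonneg y))
    have := hdom.dotProduct_mulVec_nonneg y
    rw [sub_mulVec, vecMulVec_mulVec, hy, MulOpposite.op_zero, zero_smul, zero_sub, smul_mulVec,
      dotProduct_neg, neg_nonneg, dotProduct_smul] at this
    exact (smul_nonpos_iff_nonpos_of_pos_left ha).1 this
  have hσψ : σ = vecMulVec (σ *ᵥ ψ) (star ψ) := by
    refine ext_iff_mulVec.2 fun x => ?_
    have := hker (x - (star ψ ⬝ᵥ x) • ψ)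
      (by rw [dotProduct_sub, dotProduct_smul, hψ, smul_eq_mul, mul_one, sub_self])
    rw [mulVec_sub, mulVec_smul, sub_eq_zero] at this
    rw [this, vecMulVec_mulVec, op_smul_eq_smul]
  have htr : star ψ ⬝ᵥ σ *ᵥ ψ = 1 := by
    have := congrArg trace hσψ
    rwa [trace_vecMulVec, hσ.2, dotProduct_comm, eq_comm] at this
  have hψfix : σ *ᵥ ψ = ψ := by
    conv_lhs => rw [← hσ.1.1.eq, hσψ, conjTranspose_vecMulVec, star_star, vecMulVec_mulVec,
      star_dotProduct, htr]
    simp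
  rwa [hψfix] at hσψ

theorem eq_of_mem_extremePoints_of_posSemidef_sub {ρ P : Matrix ι ι ℂ}
    (hρ : ρ ∈ {ρ : Matrix ι ι ℂ | IsDensity ρ}.extremePoints ℝ) (hP : IsDensity P) {t : ℝ}
    (ht : 0 < t) (hsub : (ρ - t • P).PosSemidef) : P = ρ := by
  have htr : (ρ - t • P).trace = ((1 - t : ℝ) : ℂ) := by
    rw [trace_sub, trace_smul, hρ.1.2, hP.2]; simp
  have ht1 : t ≤ 1 := by
    have := hsub.trace_nonneg
    rw [htr, Complex.zero_le_real] at this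
    linarith
  rcases ht1.eq_or_lt with rfl | ht1
  · rw [one_smul] at hsub htr
    exact (sub_eq_zero.1 (hsub.trace_eq_zero_iff.1 (by simp [htr]))).symm
  · set τ := (1 - t)⁻¹ • (ρ - t • P)
    have hτ : IsDensity τ := by
      refine ⟨hsub.smul (inv_nonneg.2 (by linarith)), ?_⟩
      rw [trace_smul, htr, Complex.real_smul, ← Complex.ofReal_mul,
        inv_mul_cancel₀ (by linarith), Complex.ofReal_one]
    refine hρ.2 hP hτ ⟨t, 1 - t, ht, by linarith, by ring, ?_⟩
    simp [τ, smul_smul, mul_inv_cancel₀ (by linarith : 1 - t ≠ 0)]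

end Density

section RankOne

variable {d : ℕ}

theorem IsRankOneProj.mem_extremePoints {P : Matrix (Fin d) (Fin d) ℂ} (hP : IsRankOneProj P) :
    P ∈ {ρ : Matrix (Fin d) (Fin d) ℂ | IsDensity ρ}.extremePoints ℝ := by
  obtain ⟨ψ, hψ, rfl⟩ := hP
  refine ⟨isDensity_vecMulVec_star hψ, fun σ hσ τ hτ ⟨a, b, ha, hb, _, hcomb⟩ => ?_⟩
  refine eq_vecMulVec_star_of_posSemidef_sub hσ hψ ha ?_
  rw [← hcomb, add_sub_cancel_left]
  exact hτ.1.smul hb.le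

theorem isRankOneProj_of_mem_extremePoints {ρ : Matrix (Fin d) (Fin d) ℂ}
    (hρ : ρ ∈ {ρ : Matrix (Fin d) (Fin d) ℂ | IsDensity ρ}.extremePoints ℝ) : IsRankOneProj ρ := by
  have hH := hρ.1.1.1
  obtain ⟨k, -, hk⟩ : ∃ k ∈ Finset.univ, (0 : ℝ) < hH.eigenvalues k := by
    have hsum : ∑ i, hH.eigenvalues i = 1 := by
      have := hH.trace_eq_sum_eigenvalues
      rw [hρ.1.2, ← RCLike.ofReal_sum] at this
      exact RCLike.ofReal_injective (this.symm.trans RCLike.ofReal_one.symm)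
    refine Finset.exists_lt_of_sum_lt ?_
    rw [Finset.sum_const_zero, hsum]
    exact zero_lt_one
  set u := hH.eigenvectorBasis k
  have hu : star ⇑u ⬝ᵥ ⇑u = 1 := by
    rw [dotProduct_comm, ← EuclideanSpace.inner_eq_star_dotProduct, inner_self_eq_norm_sq_to_K,
      hH.eigenvectorBasis.orthonormal.1 k]
    simp
  refine ⟨u, hu, (eq_of_mem_extremePoints_of_posSemidef_sub hρ (isDensity_vecMulVec_star hu) hk
    (hρ.1.1.sub_smul_vecMulVec_star hu (hH.mulVec_eigenvectorBasis k))).symm⟩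

theorem extremePoints_setOf_isDensity :
    {ρ : Matrix (Fin d) (Fin d) ℂ | IsDensity ρ}.extremePoints ℝ = {P | IsRankOneProj P} :=
  Set.ext fun _ => ⟨isRankOneProj_of_mem_extremePoints, IsRankOneProj.mem_extremePoints⟩

end RankOne

/-- A state space symmetry maps rank-one projections (pure states) to rank-one
projections, and restricts to a bijection between the sets of rank-one projections. -/
theorem stateSymmetry_pure_to_pure (m n : ℕ)
    (S : Matrix (Fin m) (Fin m) ℂ → Matrix (Fin n) (Fin n) ℂ)
    (hS : IsStateSymmetry S) :
    (∀ P : Matrix (Fin m) (Fin m) ℂ, IsRankOneProj P → IsRankOneProj (S P)) ∧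
    Set.BijOn S {P | IsRankOneProj P} {P | IsRankOneProj P} := by
  have hconv : ∀ ρ ∈ {ρ | IsDensity ρ}, ∀ σ ∈ {ρ | IsDensity ρ}, ∀ a b : ℝ, 0 < a → 0 < b →
      a + b = 1 → S (a • ρ + b • σ) = a • S ρ + b • S σ := by
    rintro ρ hρ σ hσ a b ha hb hab
    obtain rfl : b = 1 - a := by linarith
    simpa only [Complex.coe_smul] using hS.2 ρ σ hρ hσ a ha.le (by linarith)
  have hext := hS.1.extremePoints convex_setOf_isDensity hconv
  rw [extremePoints_setOf_isDensity, extremePoints_setOf_isDensity] at hext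
  exact ⟨fun _ hP => hext.mapsTo hP, hext⟩
end
end

section
/- Let S be a state space symmetry from the density matrices on ℂ^m to the density matrices on ℂ^n. Then for all unit vectors ψ, φ ∈ ℂ^m: Tr[S(|ψ⟩⟨ψ|) · S(|φ⟩⟨φ|)] = |⟨ψ|φ⟩|². In other words, the induced transformation of rays preserves the ray product. -/
open scoped ComplexOrder Kronecker
open Matrix

noncomputable section

/-!
A state space symmetry is an affine bijection between convex sets, so it maps extreme points, the
pure states `|ψ⟩⟨ψ|`, to pure states. For unit vectors `ψ`, `φ` with `s = |⟨ψ|φ⟩|`, the top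
eigenvalue of `(|ψ⟩⟨ψ| + |φ⟩⟨φ|)/2` is `(1 + s)/2`, and this is the largest weight with which a pure
state can occur in a convex decomposition of that mixture. Affine bijections carry such
decompositions along, so `s` is preserved (one inequality for `S`, the other for its inverse), and
`Tr[|a⟩⟨a| |b⟩⟨b|] = |⟨a|b⟩|²` finishes the proof.
-/


open scoped InnerProductSpace

theorem norm_inner_sq_add_norm_inner_sq_le {𝕜 E : Type*} [RCLike 𝕜] [NormedAddCommGroup E]
    [InnerProductSpace 𝕜 E] {a b c : E} (ha : ‖a‖ = 1) (hb : ‖b‖ = 1) (hc : ‖c‖ = 1) :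
    ‖⟪a, c⟫_𝕜‖ ^ 2 + ‖⟪b, c⟫_𝕜‖ ^ 2 ≤ 1 + ‖⟪a, b⟫_𝕜‖ := by
  set x := ⟪a, c⟫_𝕜
  set y := ⟪b, c⟫_𝕜
  set T := ‖x‖ ^ 2 + ‖y‖ ^ 2
  -- Cauchy–Schwarz against `u := x a + y b` gives `T ≤ ‖u‖`, while `‖u‖² ≤ T (1 + |⟪a, b⟫|)`.
  set u := x • a + y • b
  have hT : T ≤ ‖u‖ := by
    have hu : ⟪u, c⟫_𝕜 = (T : 𝕜) := by
      simp only [u, T, x, y, inner_add_left, inner_smul_left, RCLike.conj_mul]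
      push_cast
      rfl
    calc T = ‖⟪u, c⟫_𝕜‖ := by rw [hu, RCLike.norm_ofReal, abs_of_nonneg (by positivity)]
      _ ≤ ‖u‖ * ‖c‖ := norm_inner_le_norm u c
      _ = ‖u‖ := by rw [hc, mul_one]
  have hu : ‖u‖ ^ 2 ≤ T * (1 + ‖⟪a, b⟫_𝕜‖) := by
    have hre : RCLike.re ⟪x • a, y • b⟫_𝕜 ≤ ‖x‖ * ‖y‖ * ‖⟪a, b⟫_𝕜‖ := by
      calc RCLike.re ⟪x • a, y • b⟫_𝕜 ≤ ‖⟪x • a, y • b⟫_𝕜‖ := RCLike.re_le_norm _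
        _ = ‖x‖ * ‖y‖ * ‖⟪a, b⟫_𝕜‖ := by
          rw [inner_smul_left, inner_smul_right, norm_mul, norm_mul, RCLike.norm_conj, mul_assoc]
    rw [norm_add_sq (𝕜 := 𝕜), norm_smul, norm_smul, ha, hb]
    nlinarith [sq_nonneg (‖x‖ - ‖y‖), norm_nonneg ⟪a, b⟫_𝕜]
  nlinarith [norm_nonneg u, norm_nonneg ⟪a, b⟫_𝕜]

section

variable {ι : Type*} [Fintype ι]

theorem star_dotProduct_swap (a b : ι → ℂ) : star b ⬝ᵥ a = starRingEnd ℂ (star a ⬝ᵥ b) := by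
  rw [star_dotProduct, Complex.star_def]

theorem normSq_dotProduct_add_normSq_dotProduct_le {a b c : ι → ℂ} (ha : star a ⬝ᵥ a = 1)
    (hb : star b ⬝ᵥ b = 1) (hc : star c ⬝ᵥ c = 1) :
    Complex.normSq (star a ⬝ᵥ c) + Complex.normSq (star b ⬝ᵥ c) ≤ 1 + ‖star a ⬝ᵥ b‖ := by
  have hinner (v w : ι → ℂ) : ⟪WithLp.toLp 2 v, WithLp.toLp 2 w⟫_ℂ = star v ⬝ᵥ w := by
    rw [EuclideanSpace.inner_toLp_toLp, dotProduct_comm]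
  have hnorm {v : ι → ℂ} (hv : star v ⬝ᵥ v = 1) : ‖WithLp.toLp 2 v‖ = 1 := by
    have := norm_sq_eq_re_inner (𝕜 := ℂ) (WithLp.toLp 2 v)
    rw [hinner, hv, RCLike.one_re] at this
    exact (pow_eq_one_iff_of_nonneg (norm_nonneg _) two_ne_zero).mp this
  simpa only [hinner, Complex.normSq_eq_norm_sq] using
    norm_inner_sq_add_norm_inner_sq_le (𝕜 := ℂ) (hnorm ha) (hnorm hb) (hnorm hc)

theorem star_dotProduct_vecMulVec_mulVec (a c : ι → ℂ) :
    star c ⬝ᵥ (vecMulVec a (star a) *ᵥ c) = Complex.normSq (star a ⬝ᵥ c) := by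
  rw [vecMulVec_mulVec, op_smul_eq_smul, dotProduct_smul, smul_eq_mul, star_dotProduct_swap a c,
    Complex.mul_conj]

theorem trace_vecMulVec_mul_vecMulVec (a b : ι → ℂ) :
    (vecMulVec a (star a) * vecMulVec b (star b)).trace = Complex.normSq (star a ⬝ᵥ b) := by
  rw [vecMulVec_mul_vecMulVec, trace_vecMulVec, dotProduct_smul, smul_eq_mul,
    dotProduct_comm a, star_dotProduct_swap a b, Complex.mul_conj]

theorem exists_unit_mulVec_eq_smul {A : Matrix ι ι ℂ} {v : ι → ℂ} {μ : ℂ} (hv : v ≠ 0)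
    (h : A *ᵥ v = μ • v) : ∃ u : ι → ℂ, star u ⬝ᵥ u = 1 ∧ A *ᵥ u = μ • u := by
  obtain ⟨hre, him⟩ := Complex.lt_def.mp (dotProduct_star_self_pos_iff.mpr hv)
  set N := (star v ⬝ᵥ v).re
  have hNv : (N : ℂ) = star v ⬝ᵥ v := Complex.ext rfl him
  refine ⟨(((√N)⁻¹ : ℝ) : ℂ) • v, ?_, by rw [mulVec_smul, h, smul_comm]⟩
  rw [star_smul, smul_dotProduct, dotProduct_smul, ← hNv, Complex.star_def, Complex.conj_ofReal,
    smul_eq_mul, smul_eq_mul, ← mul_assoc, ← Complex.ofReal_mul, ← Complex.ofReal_mul]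
  norm_cast
  rw [← mul_inv, Real.mul_self_sqrt hre.le, inv_mul_cancel₀ hre.ne']

theorem exists_unit_eigenvector_vecMulVec_add_vecMulVec {ψ φ : ι → ℂ}
    (hψ : star ψ ⬝ᵥ ψ = 1) (hφ : star φ ⬝ᵥ φ = 1) :
    ∃ c : ι → ℂ, star c ⬝ᵥ c = 1 ∧
      (vecMulVec ψ (star ψ) + vecMulVec φ (star φ)) *ᵥ c
        = ((1 + ‖star ψ ⬝ᵥ φ‖ : ℝ) : ℂ) • c := by
  set z := star ψ ⬝ᵥ φ
  obtain ⟨ω, hω, hωz⟩ := Complex.exists_norm_eq_mul_self z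
  have hωω : starRingEnd ℂ ω * ω = 1 := by rw [RCLike.conj_mul, hω]; norm_num
  have hz : starRingEnd ℂ z = ω * ‖z‖ := by
    have := congrArg (starRingEnd ℂ) hωz
    rw [Complex.conj_ofReal, map_mul] at this
    linear_combination (-starRingEnd ℂ z) * hωω - ω * this
  -- The phase `ω` aligns `φ` with `ψ`; then `ψ + ω φ` is an eigenvector for the top eigenvalue.
  set v := ψ + ω • φ
  have hψv : star ψ ⬝ᵥ v = 1 + ‖z‖ := by
    rw [dotProduct_add, dotProduct_smul, hψ, smul_eq_mul, hωz]
  have hφv : star φ ⬝ᵥ v = ω * (1 + ‖z‖) := by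
    rw [dotProduct_add, dotProduct_smul, hφ, smul_eq_mul, star_dotProduct_swap, hz]
    ring
  have hv : v ≠ 0 := by
    intro hv
    have := congrArg Complex.re hψv
    rw [hv, dotProduct_zero, Complex.zero_re, Complex.add_re, Complex.one_re,
      Complex.ofReal_re] at this
    linarith [norm_nonneg z]
  refine exists_unit_mulVec_eq_smul hv ?_
  rw [add_mulVec, vecMulVec_mulVec, vecMulVec_mulVec, op_smul_eq_smul, op_smul_eq_smul, hψv, hφv]
  push_cast
  module

theorem isDensity_vecMulVec {u : ι → ℂ} (hu : star u ⬝ᵥ u = 1) : IsDensity (vecMulVec u (star u)) :=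
  ⟨posSemidef_vecMulVec_self_star u, by rw [trace_vecMulVec, dotProduct_comm, hu]⟩

theorem IsDensity.smul_add_one_sub_smul {ρ σ : Matrix ι ι ℂ} (hρ : IsDensity ρ)
    (hσ : IsDensity σ) {p : ℝ} (hp₀ : 0 ≤ p) (hp₁ : p ≤ 1) :
    IsDensity ((p : ℂ) • ρ + ((1 - p : ℝ) : ℂ) • σ) := by
  refine ⟨(hρ.1.smul (Complex.zero_le_real.mpr hp₀)).add
    (hσ.1.smul (Complex.zero_le_real.mpr (sub_nonneg.mpr hp₁))), ?_⟩
  rw [trace_add, trace_smul, trace_smul, hρ.2, hσ.2]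
  push_cast
  ring

theorem Matrix.PosSemidef.sub_smul_vecMulVec {ρ : Matrix ι ι ℂ} (hρ : ρ.PosSemidef) {u : ι → ℂ}
    (hu : star u ⬝ᵥ u = 1) {t : ℝ} (h : ρ *ᵥ u = (t : ℂ) • u) :
    (ρ - (t : ℂ) • vecMulVec u (star u)).PosSemidef := by
  classical
  set P := vecMulVec u (star u)
  have hP : Pᴴ = P := (posSemidef_vecMulVec_self_star u).1
  have hPP : P * P = P := by rw [vecMulVec_mul_vecMulVec, hu, one_smul]
  have hρP : ρ * P = (t : ℂ) • P := by rw [mul_vecMulVec, h, smul_vecMulVec]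
  have hPρ : P * ρ = (t : ℂ) • P := by
    rw [← conjTranspose_conjTranspose (P * ρ), conjTranspose_mul, hP, hρ.1.eq, hρP,
      conjTranspose_smul, hP, Complex.star_def, Complex.conj_ofReal]
  -- Compressing `ρ` to the orthogonal complement of its eigenvector `u` removes exactly `t P`.
  have hcompress : (1 - P)ᴴ * ρ * (1 - P) = ρ - (t : ℂ) • P := by
    rw [conjTranspose_sub, conjTranspose_one, hP, sub_mul, one_mul, hPρ, mul_sub, mul_one,
      sub_mul, hρP, Matrix.smul_mul, hPP]
    abel
  exact hcompress ▸ hρ.conjTranspose_mul_mul_same (1 - P)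

theorem IsDensity.exists_eq_smul_vecMulVec_add {ρ : Matrix ι ι ℂ} (hρ : IsDensity ρ)
    {u : ι → ℂ} (hu : star u ⬝ᵥ u = 1) {t : ℝ} (h : ρ *ᵥ u = (t : ℂ) • u) :
    t ≤ 1 ∧ ∃ σ, IsDensity σ ∧ ρ = (t : ℂ) • vecMulVec u (star u) + ((1 - t : ℝ) : ℂ) • σ := by
  have hpsd := hρ.1.sub_smul_vecMulVec hu h
  have htr : (ρ - (t : ℂ) • vecMulVec u (star u)).trace = ((1 - t : ℝ) : ℂ) := by
    rw [trace_sub, trace_smul, (isDensity_vecMulVec hu).2, hρ.2]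
    push_cast
    ring
  have ht : t ≤ 1 := sub_nonneg.mp (Complex.zero_le_real.mp (htr ▸ hpsd.trace_nonneg))
  refine ⟨ht, ?_⟩
  rcases ht.eq_or_lt with rfl | ht
  · have hzero := (hpsd.trace_eq_zero_iff).mp (by rw [htr, sub_self, Complex.ofReal_zero])
    refine ⟨ρ, hρ, ?_⟩
    rw [sub_eq_zero.mp hzero, sub_self, Complex.ofReal_zero, zero_smul, add_zero]
  · have hpos : (0 : ℝ) < 1 - t := sub_pos.mpr ht
    refine ⟨(((1 - t)⁻¹ : ℝ) : ℂ) • (ρ - (t : ℂ) • vecMulVec u (star u)),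
      ⟨hpsd.smul (Complex.zero_le_real.mpr (inv_nonneg.mpr hpos.le)), ?_⟩, ?_⟩
    · rw [trace_smul, htr, smul_eq_mul, ← Complex.ofReal_mul, inv_mul_cancel₀ hpos.ne',
        Complex.ofReal_one]
    · rw [smul_smul, ← Complex.ofReal_mul, mul_inv_cancel₀ hpos.ne', Complex.ofReal_one, one_smul,
        add_sub_cancel]

theorem IsDensity.eq_vecMulVec_of_forall_orthogonal {ρ : Matrix ι ι ℂ} (hρ : IsDensity ρ)
    {u : ι → ℂ} (hu : star u ⬝ᵥ u = 1)
    (h : ∀ x, star u ⬝ᵥ x = 0 → star x ⬝ᵥ (ρ *ᵥ x) = 0) : ρ = vecMulVec u (star u) := by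
  have hcol : ρ = vecMulVec (ρ *ᵥ u) (star u) := by
    refine ext_iff_mulVec.mpr fun v => ?_
    have hx : star u ⬝ᵥ (v - (star u ⬝ᵥ v) • u) = 0 := by
      rw [dotProduct_sub, dotProduct_smul, hu, smul_eq_mul, mul_one, sub_self]
    have := (hρ.1.dotProduct_mulVec_zero_iff _).mp (h _ hx)
    rw [mulVec_sub, mulVec_smul, sub_eq_zero] at this
    rw [this, vecMulVec_mulVec, op_smul_eq_smul]
  have htr : star u ⬝ᵥ (ρ *ᵥ u) = 1 := by
    have := hρ.2
    rwa [hcol, trace_vecMulVec, dotProduct_comm] at this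
  have heig : ρ *ᵥ u = u := by
    rw [← hρ.1.1.eq, hcol, conjTranspose_vecMulVec, star_star, vecMulVec_mulVec, op_smul_eq_smul,
      star_dotProduct_swap, htr, map_one, one_smul]
  rwa [heig] at hcol

theorem vecMulVec_mem_extremePoints {u : ι → ℂ} (hu : star u ⬝ᵥ u = 1) :
    vecMulVec u (star u) ∈ {ρ : Matrix ι ι ℂ | IsDensity ρ}.extremePoints ℝ := by
  refine ⟨isDensity_vecMulVec hu, fun ρ₁ hρ₁ ρ₂ hρ₂ ⟨a, b, ha, hb, _, hab⟩ => ?_⟩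
  refine hρ₁.eq_vecMulVec_of_forall_orthogonal hu fun x hx => ?_
  -- On `u^⊥` the quadratic form of `P_u` vanishes, and it is a positive combination of those
  -- of `ρ₁` and `ρ₂`.
  have hsum : (a : ℂ) * (star x ⬝ᵥ (ρ₁ *ᵥ x)) + (b : ℂ) * (star x ⬝ᵥ (ρ₂ *ᵥ x)) = 0 := by
    rw [← smul_eq_mul, ← smul_eq_mul, ← dotProduct_smul, ← dotProduct_smul, ← dotProduct_add,
      ← smul_mulVec, ← smul_mulVec, ← add_mulVec, Complex.coe_smul, Complex.coe_smul, hab,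
      star_dotProduct_vecMulVec_mulVec, hx, map_zero, Complex.ofReal_zero]
  have h₁ := mul_nonneg (Complex.zero_le_real.mpr ha.le) (hρ₁.1.dotProduct_mulVec_nonneg x)
  have h₂ := mul_nonneg (Complex.zero_le_real.mpr hb.le) (hρ₂.1.dotProduct_mulVec_nonneg x)
  exact (mul_eq_zero.mp ((add_eq_zero_iff_of_nonneg h₁ h₂).mp hsum).1).resolve_left
    (Complex.ofReal_ne_zero.mpr ha.ne')

theorem exists_eq_vecMulVec_of_mem_extremePoints {ρ : Matrix ι ι ℂ}
    (h : ρ ∈ {ρ : Matrix ι ι ℂ | IsDensity ρ}.extremePoints ℝ) :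
    ∃ u : ι → ℂ, star u ⬝ᵥ u = 1 ∧ ρ = vecMulVec u (star u) := by
  have hρ : IsDensity ρ := h.1
  have hne : ρ ≠ 0 := fun h0 => by simpa [h0] using hρ.2
  obtain ⟨v, t, ht, hv, hρv⟩ := hρ.1.1.exists_eigenvector_of_ne_zero hne
  rw [← Complex.coe_smul] at hρv
  obtain ⟨u, hu, hρu⟩ := exists_unit_mulVec_eq_smul hv hρv
  have ht₀ : 0 < t := by
    have := hρ.1.dotProduct_mulVec_nonneg u
    rw [hρu, dotProduct_smul, hu, smul_eq_mul, mul_one, Complex.zero_le_real] at this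
    exact this.lt_of_ne' ht
  obtain ⟨ht₁, σ, hσ, hρσ⟩ := hρ.exists_eq_smul_vecMulVec_add hu hρu
  refine ⟨u, hu, ?_⟩
  rcases ht₁.eq_or_lt with rfl | ht₁
  · rw [hρσ, sub_self, Complex.ofReal_zero, zero_smul, add_zero, Complex.ofReal_one, one_smul]
  · refine (h.2 (isDensity_vecMulVec hu) hσ ⟨t, 1 - t, ht₀, sub_pos.mpr ht₁, by ring, ?_⟩).symm
    rw [hρσ, Complex.coe_smul, Complex.coe_smul]

end

section StateSymmetry

variable {ι κ : Type*} [Fintype ι] [Fintype κ] {S : Matrix ι ι ℂ → Matrix κ κ ℂ}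

theorem IsStateSymmetry.mapsTo_extremePoints (hS : IsStateSymmetry S) :
    Set.MapsTo S ({ρ | IsDensity ρ}.extremePoints ℝ) ({ρ | IsDensity ρ}.extremePoints ℝ) := by
  intro ρ hρ
  refine ⟨hS.1.mapsTo hρ.1, fun x₁ hx₁ x₂ hx₂ ⟨a, b, ha, hb, hab, hx⟩ => ?_⟩
  obtain ⟨τ₁, hτ₁, rfl⟩ := hS.1.surjOn hx₁
  obtain ⟨τ₂, hτ₂, rfl⟩ := hS.1.surjOn hx₂
  obtain rfl := eq_sub_of_add_eq' hab
  rw [← Complex.coe_smul, ← Complex.coe_smul] at hx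
  have hmix : (a : ℂ) • τ₁ + ((1 - a : ℝ) : ℂ) • τ₂ = ρ :=
    hS.1.injOn (IsDensity.smul_add_one_sub_smul hτ₁ hτ₂ ha.le (sub_nonneg.mp hb.le)) hρ.1
      ((hS.2 τ₁ τ₂ hτ₁ hτ₂ a ha.le (sub_nonneg.mp hb.le)).trans hx)
  rw [Complex.coe_smul, Complex.coe_smul] at hmix
  rw [hρ.2 hτ₁ hτ₂ ⟨a, 1 - a, ha, hb, hab, hmix⟩]

theorem IsStateSymmetry.exists_vecMulVec_eq (hS : IsStateSymmetry S) {u : ι → ℂ}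
    (hu : star u ⬝ᵥ u = 1) :
    ∃ v : κ → ℂ, star v ⬝ᵥ v = 1 ∧ S (vecMulVec u (star u)) = vecMulVec v (star v) :=
  exists_eq_vecMulVec_of_mem_extremePoints <|
    hS.mapsTo_extremePoints (vecMulVec_mem_extremePoints hu)

theorem IsStateSymmetry.invFunOn (hS : IsStateSymmetry S) :
    IsStateSymmetry (Function.invFunOn S {ρ | IsDensity ρ}) := by
  set g := Function.invFunOn S {ρ | IsDensity ρ}
  have hinv : Set.InvOn g S _ _ := hS.1.invOn_invFunOn
  have hg : Set.MapsTo g {ρ | IsDensity ρ} {ρ | IsDensity ρ} := hS.1.surjOn.mapsTo_invFunOn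
  refine ⟨hS.1.symm hinv.symm, fun ρ σ hρ hσ p hp₀ hp₁ => ?_⟩
  have hmix := IsDensity.smul_add_one_sub_smul (hg hρ) (hg hσ) hp₀ hp₁
  rw [← hinv.1 hmix, hS.2 _ _ (hg hρ) (hg hσ) p hp₀ hp₁, hinv.2 hρ, hinv.2 hσ]

theorem IsStateSymmetry.norm_dotProduct_le_of_map_eq (hS : IsStateSymmetry S) {ψ φ : ι → ℂ}
    {a b : κ → ℂ} (hψ : star ψ ⬝ᵥ ψ = 1) (hφ : star φ ⬝ᵥ φ = 1) (ha : star a ⬝ᵥ a = 1)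
    (hb : star b ⬝ᵥ b = 1) (hSψ : S (vecMulVec ψ (star ψ)) = vecMulVec a (star a))
    (hSφ : S (vecMulVec φ (star φ)) = vecMulVec b (star b)) :
    ‖star ψ ⬝ᵥ φ‖ ≤ ‖star a ⬝ᵥ b‖ := by
  obtain ⟨c, hc, hPc⟩ := exists_unit_eigenvector_vecMulVec_add_vecMulVec hψ hφ
  set s := ‖star ψ ⬝ᵥ φ‖
  set ρ := ((1 / 2 : ℝ) : ℂ) • vecMulVec ψ (star ψ) + ((1 - 1 / 2 : ℝ) : ℂ) • vecMulVec φ (star φ)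
  have hρ : IsDensity ρ :=
    (isDensity_vecMulVec hψ).smul_add_one_sub_smul (isDensity_vecMulVec hφ) (by norm_num)
      (by norm_num)
  have hρc : ρ *ᵥ c = (((1 + s) / 2 : ℝ) : ℂ) • c := by
    have hρ_eq : ρ = ((1 / 2 : ℝ) : ℂ) • (vecMulVec ψ (star ψ) + vecMulVec φ (star φ)) := by
      simp only [ρ, smul_add]
      norm_num
    rw [hρ_eq, smul_mulVec, hPc, smul_smul, ← Complex.ofReal_mul]
    ring_nf
  -- Splitting off the top eigenvector of `ρ` and transporting the splitting by `S` produces a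
  -- unit vector `c'` at which the quadratic form of `P_a + P_b` is at least `1 + s`.
  obtain ⟨ht₁, σ, hσ, hρσ⟩ := hρ.exists_eq_smul_vecMulVec_add hc hρc
  obtain ⟨c', hc', hSc⟩ := hS.exists_vecMulVec_eq hc
  have hsplit :
      ((1 / 2 : ℝ) : ℂ) • vecMulVec a (star a) + ((1 - 1 / 2 : ℝ) : ℂ) • vecMulVec b (star b)
      = (((1 + s) / 2 : ℝ) : ℂ) • vecMulVec c' (star c') + ((1 - (1 + s) / 2 : ℝ) : ℂ) • S σ := by
    rw [← hSψ, ← hSφ, ← hS.2 _ _ (isDensity_vecMulVec hψ) (isDensity_vecMulVec hφ) _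
      (by norm_num) (by norm_num), ← hSc, ← hS.2 _ _ (isDensity_vecMulVec hc) hσ _
      (by positivity) ht₁]
    exact congrArg S hρσ
  have hexp := congrArg (fun M => (star c' ⬝ᵥ (M *ᵥ c')).re) hsplit
  simp only [add_mulVec, smul_mulVec, dotProduct_add, dotProduct_smul, smul_eq_mul,
    star_dotProduct_vecMulVec_mulVec, hc', Complex.add_re, Complex.re_ofReal_mul,
    Complex.ofReal_re, map_one] at hexp
  have hσc' : 0 ≤ (1 - (1 + s) / 2) * (star c' ⬝ᵥ (S σ *ᵥ c')).re :=
    mul_nonneg (sub_nonneg.mpr ht₁) ((hS.1.mapsTo hσ).1.re_dotProduct_nonneg c')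
  have hbound := normSq_dotProduct_add_normSq_dotProduct_le ha hb hc'
  linarith

theorem IsStateSymmetry.norm_dotProduct_eq_of_map_eq (hS : IsStateSymmetry S) {ψ φ : ι → ℂ}
    {a b : κ → ℂ} (hψ : star ψ ⬝ᵥ ψ = 1) (hφ : star φ ⬝ᵥ φ = 1) (ha : star a ⬝ᵥ a = 1)
    (hb : star b ⬝ᵥ b = 1) (hSψ : S (vecMulVec ψ (star ψ)) = vecMulVec a (star a))
    (hSφ : S (vecMulVec φ (star φ)) = vecMulVec b (star b)) :
    ‖star a ⬝ᵥ b‖ = ‖star ψ ⬝ᵥ φ‖ := by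
  have hinv := hS.1.invOn_invFunOn
  refine le_antisymm (hS.invFunOn.norm_dotProduct_le_of_map_eq ha hb hψ hφ ?_ ?_)
    (hS.norm_dotProduct_le_of_map_eq hψ hφ ha hb hSψ hSφ)
  · rw [← hSψ, hinv.1 (isDensity_vecMulVec hψ)]
  · rw [← hSφ, hinv.1 (isDensity_vecMulVec hφ)]

end StateSymmetry

/-- A state space symmetry preserves the ray product:
`Tr[S(|ψ⟩⟨ψ|)·S(|φ⟩⟨φ|)] = |⟨ψ|φ⟩|²` for all unit vectors `ψ`, `φ`. -/
theorem stateSymmetry_ray_product (m n : ℕ)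
    (S : Matrix (Fin m) (Fin m) ℂ → Matrix (Fin n) (Fin n) ℂ)
    (hS : IsStateSymmetry S) :
    ∀ ψ φ : Fin m → ℂ, star ψ ⬝ᵥ ψ = 1 → star φ ⬝ᵥ φ = 1 →
      (S (Matrix.vecMulVec ψ (star ψ)) * S (Matrix.vecMulVec φ (star φ))).trace
        = (Complex.normSq (star ψ ⬝ᵥ φ) : ℂ) := by
  intro ψ φ hψ hφ
  obtain ⟨a, ha, hSψ⟩ := hS.exists_vecMulVec_eq hψ
  obtain ⟨b, hb, hSφ⟩ := hS.exists_vecMulVec_eq hφ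
  rw [hSψ, hSφ, trace_vecMulVec_mul_vecMulVec, Complex.normSq_eq_norm_sq,
    Complex.normSq_eq_norm_sq, hS.norm_dotProduct_eq_of_map_eq hψ hφ ha hb hSψ hSφ]
end
end
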